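/- Let p ∈ (1, ∞). For all vectors ξ, χ ∈ ℝ^d, one has (|ξ|^{p-2} ξ - |χ|^{p-2} χ) · (ξ - χ) ≥ min((p-1)/2, 2^{1-p}) |ξ - χ|² (|ξ| + |χ|)^{p-2}. -/

import Mathlib

open scoped RealInnerProductSpace
open Real

/-! With `a = ‖ξ‖`, `b = ‖χ‖` and `t = ⟪ξ, χ⟫`, both sides are affine in `t ∈ [-ab, ab]`,
so it suffices to treat collinear vectors, `t = ±ab`. For `t = -ab` the claim is
`2^(1-p) (a+b)^(p-1) ≤ a^(p-1) + b^(p-1)`: Jensen for `p ≥ 2`, subadditivity of `x^(p-1)`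
for `p ≤ 2`. For `t = ab` and `b ≤ a` it is a lower bound on `a^(p-1) - b^(p-1)`: for `p ≤ 2`
the tangent of the concave `x^(p-1)` at `a` gives the constant `p - 1`, for `p ≥ 2` the
tangent of the convex `x^(p-1)` at the midpoint `(a+b)/2` gives `2^(1-p)`. -/

namespace Real

lemma tangent_le_rpow_of_one_le {q x y : ℝ} (hq : 1 ≤ q) (hx : 0 ≤ x) (hy : 0 < y) :
    y ^ q + q * y ^ (q - 1) * (x - y) ≤ x ^ q := by
  have h := one_add_mul_self_le_rpow_one_add
    (by linarith [div_nonneg hx hy.le] : -1 ≤ x / y - 1) hq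
  rw [add_sub_cancel, div_rpow hx hy.le, le_div_iff₀ (rpow_pos_of_pos hy q)] at h
  calc y ^ q + q * y ^ (q - 1) * (x - y) = (1 + q * (x / y - 1)) * y ^ q := by
        rw [rpow_sub_one hy.ne']; field_simp
    _ ≤ x ^ q := h

lemma rpow_le_tangent_of_le_one {q x y : ℝ} (hq₀ : 0 ≤ q) (hq₁ : q ≤ 1) (hx : 0 ≤ x)
    (hy : 0 < y) : x ^ q ≤ y ^ q + q * y ^ (q - 1) * (x - y) := by
  have h := rpow_one_add_le_one_add_mul_self
    (by linarith [div_nonneg hx hy.le] : -1 ≤ x / y - 1) hq₀ hq₁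
  rw [add_sub_cancel, div_rpow hx hy.le, div_le_iff₀ (rpow_pos_of_pos hy q)] at h
  calc x ^ q ≤ (1 + q * (x / y - 1)) * y ^ q := h
    _ = y ^ q + q * y ^ (q - 1) * (x - y) := by rw [rpow_sub_one hy.ne']; field_simp

lemma rpow_sub_two_mul_self {p x : ℝ} (hp : 1 < p) (hx : 0 ≤ x) :
    x ^ (p - 2) * x = x ^ (p - 1) := by
  rw [← rpow_add_one' hx (by linarith)]
  ring_nf

lemma div_two_rpow {x : ℝ} (hx : 0 ≤ x) (r : ℝ) : (x / 2) ^ r = 2 ^ (-r) * x ^ r := by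
  rw [div_rpow hx zero_le_two, rpow_neg zero_le_two]
  ring

end Real

lemma add_mul_nonneg_of_endpoints {A B lo hi t : ℝ} (hlo : 0 ≤ A + B * lo)
    (hhi : 0 ≤ A + B * hi) (ht : t ∈ Set.Icc lo hi) : 0 ≤ A + B * t := by
  rcases le_total 0 B with hB | hB <;> nlinarith [ht.1, ht.2]

lemma two_rpow_mul_sub_mul_add_rpow_le_of_two_le {p a b : ℝ} (hp : 2 ≤ p) (hb : 0 ≤ b)
    (hba : b ≤ a) : 2 ^ (1 - p) * (a - b) * (a + b) ^ (p - 2) ≤ a ^ (p - 1) - b ^ (p - 1) := by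
  rcases hba.eq_or_lt with rfl | hlt
  · simp
  set m := (a + b) / 2 with hm_def
  have hm : 0 < m := by rw [hm_def]; linarith
  have tangent := tangent_le_rpow_of_one_le (by linarith : 1 ≤ p - 1) (hb.trans hlt.le) hm
  have hbm : b ^ (p - 1) ≤ m ^ (p - 1) := rpow_le_rpow hb (by linarith) (by linarith)
  have hscale : 2 ^ (1 - p) * (a + b) ^ (p - 2) = m ^ (p - 2) / 2 := by
    rw [hm_def, div_two_rpow (by linarith), show 1 - p = -(p - 2) - 1 by ring,
      rpow_sub_one two_ne_zero]
    ring
  rw [show p - 1 - 1 = p - 2 by ring] at tangent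
  have hslope : 0 ≤ m ^ (p - 2) * (a - m) := mul_nonneg (rpow_nonneg hm.le _) (by linarith)
  calc 2 ^ (1 - p) * (a - b) * (a + b) ^ (p - 2) = m ^ (p - 2) * (a - m) := by
        rw [mul_right_comm, hscale, hm_def]; ring
    _ ≤ (p - 1) * m ^ (p - 2) * (a - m) := by nlinarith
    _ ≤ a ^ (p - 1) - b ^ (p - 1) := by linarith

lemma sub_one_mul_sub_mul_add_rpow_le_of_le_two {p a b : ℝ} (hp₁ : 1 ≤ p) (hp₂ : p ≤ 2)
    (hb : 0 ≤ b) (hba : b ≤ a) :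
    (p - 1) * (a - b) * (a + b) ^ (p - 2) ≤ a ^ (p - 1) - b ^ (p - 1) := by
  rcases hba.eq_or_lt with rfl | hlt
  · simp
  have ha : 0 < a := hb.trans_lt hlt
  have tangent := rpow_le_tangent_of_le_one (by linarith : 0 ≤ p - 1) (by linarith) hb ha
  have hmono : (a + b) ^ (p - 2) ≤ a ^ (p - 2) :=
    rpow_le_rpow_of_nonpos ha (by linarith) (by linarith)
  rw [show p - 1 - 1 = p - 2 by ring] at tangent
  nlinarith [mul_le_mul_of_nonneg_left hmono
    (mul_nonneg (by linarith : (0 : ℝ) ≤ p - 1) (by linarith : 0 ≤ a - b))]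

lemma two_rpow_mul_add_rpow_le {p a b : ℝ} (hp : 1 < p) (ha : 0 ≤ a) (hb : 0 ≤ b) :
    2 ^ (1 - p) * (a + b) ^ (p - 1) ≤ a ^ (p - 1) + b ^ (p - 1) := by
  rw [show 1 - p = -(p - 1) by ring, ← div_two_rpow (add_nonneg ha hb)]
  rcases le_total 2 p with hp₂ | hp₂
  · have jensen := (convexOn_rpow (by linarith : 1 ≤ p - 1)).2 ha hb
      (by norm_num : (0 : ℝ) ≤ 1 / 2) (by norm_num : (0 : ℝ) ≤ 1 / 2) (add_halves 1)
    simp only [smul_eq_mul] at jensen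
    calc ((a + b) / 2) ^ (p - 1) = (1 / 2 * a + 1 / 2 * b) ^ (p - 1) := by ring_nf
      _ ≤ 1 / 2 * a ^ (p - 1) + 1 / 2 * b ^ (p - 1) := jensen
      _ ≤ a ^ (p - 1) + b ^ (p - 1) := by
        nlinarith [rpow_nonneg ha (p - 1), rpow_nonneg hb (p - 1)]
  · calc ((a + b) / 2) ^ (p - 1) ≤ (a + b) ^ (p - 1) :=
          rpow_le_rpow (by positivity) (by linarith) (by linarith)
      _ ≤ a ^ (p - 1) + b ^ (p - 1) := rpow_add_le_add_rpow ha hb (by linarith) (by linarith)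

lemma min_mul_sub_sq_mul_add_rpow_le {p a b : ℝ} (hp : 1 < p) (ha : 0 ≤ a) (hb : 0 ≤ b) :
    min ((p - 1) / 2) (2 ^ (1 - p)) * (a - b) ^ 2 * (a + b) ^ (p - 2)
      ≤ (a ^ (p - 1) - b ^ (p - 1)) * (a - b) := by
  wlog hba : b ≤ a generalizing a b
  · have h := this hb ha (le_of_not_ge hba)
    rw [add_comm b a] at h
    linear_combination h
  have hS : 0 ≤ (a + b) ^ (p - 2) := rpow_nonneg (add_nonneg ha hb) _
  have hab : 0 ≤ a - b := sub_nonneg.2 hba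
  have h : min ((p - 1) / 2) (2 ^ (1 - p)) * (a - b) * (a + b) ^ (p - 2)
      ≤ a ^ (p - 1) - b ^ (p - 1) := by
    rcases le_total 2 p with hp₂ | hp₂
    · calc _ ≤ 2 ^ (1 - p) * (a - b) * (a + b) ^ (p - 2) := by gcongr; exact min_le_right _ _
        _ ≤ _ := two_rpow_mul_sub_mul_add_rpow_le_of_two_le hp₂ hb hba
    · calc _ ≤ (p - 1) * (a - b) * (a + b) ^ (p - 2) := by
            gcongr; exact (min_le_left _ _).trans (by linarith)
        _ ≤ _ := sub_one_mul_sub_mul_add_rpow_le_of_le_two hp.le hp₂ hb hba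
  calc _ = min ((p - 1) / 2) (2 ^ (1 - p)) * (a - b) * (a + b) ^ (p - 2) * (a - b) := by ring
    _ ≤ _ := mul_le_mul_of_nonneg_right h hab

lemma pLaplace_strong_monotonicity_scalar {p a b t : ℝ} (hp : 1 < p) (ha : 0 ≤ a) (hb : 0 ≤ b)
    (ht : |t| ≤ a * b) :
    min ((p - 1) / 2) (2 ^ (1 - p)) * (a ^ 2 - 2 * t + b ^ 2) * (a + b) ^ (p - 2)
      ≤ a ^ (p - 2) * a ^ 2 + b ^ (p - 2) * b ^ 2 - (a ^ (p - 2) + b ^ (p - 2)) * t := by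
  set c := min ((p - 1) / 2) (2 ^ (1 - p))
  have hA := rpow_sub_two_mul_self hp ha
  have hB := rpow_sub_two_mul_self hp hb
  have hS := rpow_sub_two_mul_self hp (add_nonneg ha hb)
  have parallel := min_mul_sub_sq_mul_add_rpow_le hp ha hb
  have antiparallel :
      c * (a + b) ^ 2 * (a + b) ^ (p - 2) ≤ (a ^ (p - 1) + b ^ (p - 1)) * (a + b) :=
    calc c * (a + b) ^ 2 * (a + b) ^ (p - 2) = c * (a + b) ^ (p - 1) * (a + b) := by
          rw [← hS]; ring
      _ ≤ 2 ^ (1 - p) * (a + b) ^ (p - 1) * (a + b) := by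
          gcongr
          exact min_le_right _ _
      _ ≤ (a ^ (p - 1) + b ^ (p - 1)) * (a + b) := by
          gcongr
          exact two_rpow_mul_add_rpow_le hp ha hb
  rw [← hA, ← hB] at parallel antiparallel
  have := add_mul_nonneg_of_endpoints
    (A := a ^ (p - 2) * a ^ 2 + b ^ (p - 2) * b ^ 2 - c * (a ^ 2 + b ^ 2) * (a + b) ^ (p - 2))
    (B := 2 * c * (a + b) ^ (p - 2) - a ^ (p - 2) - b ^ (p - 2))
    (by linear_combination antiparallel) (by linear_combination parallel) (abs_le.1 ht)
  linear_combination this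

theorem pLaplace_strong_monotonicity (d : ℕ) (p : ℝ) (hp : 1 < p)
    (ξ χ : EuclideanSpace ℝ (Fin d)) :
    ⟪(‖ξ‖ ^ (p - 2)) • ξ - (‖χ‖ ^ (p - 2)) • χ, ξ - χ⟫
      ≥ min ((p - 1)/2) (2 ^ (1 - p)) * ‖ξ - χ‖^2 * (‖ξ‖ + ‖χ‖) ^ (p - 2) := by
  have hinner : ⟪(‖ξ‖ ^ (p - 2)) • ξ - (‖χ‖ ^ (p - 2)) • χ, ξ - χ⟫
      = ‖ξ‖ ^ (p - 2) * ‖ξ‖ ^ 2 + ‖χ‖ ^ (p - 2) * ‖χ‖ ^ 2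
        - (‖ξ‖ ^ (p - 2) + ‖χ‖ ^ (p - 2)) * ⟪ξ, χ⟫ := by
    simp only [inner_sub_left, inner_sub_right, real_inner_smul_left,
      real_inner_self_eq_norm_sq, real_inner_comm χ ξ]
    ring
  rw [ge_iff_le, hinner, norm_sub_sq_real]
  exact pLaplace_strong_monotonicity_scalar hp (norm_nonneg ξ) (norm_nonneg χ)
    (abs_real_inner_le_norm ξ χ)
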